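/- LLPO * LLPO is not continuously Weihrauch reducible to LLPO, i.e., LLPO * LLPO ≤*_W LLPO fails. -/

import Mathlib

/-- Baire space. -/
abbrev Baire := ℕ → ℕ

/-- A problem: a partial multivalued function on Baire space, given as the
solution-set map; the domain is the set of instances with nonempty solution set. -/
def Problem := Baire → Set Baire

/-- Domain of a problem. -/
def Dom (f : Problem) : Set Baire := {x | (f x).Nonempty}

/-- A standard computable pairing of two sequences (interleaving). -/
def pair (x y : Baire) : Baire := fun n => if n % 2 = 0 then x (n / 2) else y (n / 2)

/-- Initial segment of length `m` of a sequence. -/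
def initSeg (x : Baire) (m : ℕ) : List ℕ := (List.range m).map x

/-- `F` is (the restriction to `D` of) a partial computable function on Baire space:
there is a computable monotone oracle functional computing `F x` from prefixes of `x`,
correctly and consistently, for every `x ∈ D`. -/
def ComputableOn (F : Baire → Baire) (D : Set Baire) : Prop :=
  ∃ φ : List ℕ → ℕ → Option ℕ, Computable₂ φ ∧
    ∀ x ∈ D, ∀ n : ℕ,
      (∃ m, φ (initSeg x m) n = some (F x n)) ∧
      (∀ m v, φ (initSeg x m) n = some v → v = F x n)

/-- Weihrauch reducibility `f ≤_W g`, with the partial computable forward functional `k`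
defined on `Dom f` and the partial computable backward functional `h` defined on all
pairs `⟨x, y⟩` with `x ∈ Dom f` and `y` a `g`-solution of `k x`. -/
def WRed (f g : Problem) : Prop :=
  ∃ h k : Baire → Baire,
    ComputableOn k (Dom f) ∧
    ComputableOn h {p | ∃ x ∈ Dom f, ∃ y ∈ g (k x), p = pair x y} ∧
    ∀ x ∈ Dom f, k x ∈ Dom g ∧ ∀ y ∈ g (k x), h (pair x y) ∈ f x

/-- Weihrauch equivalence. -/
def WEquiv (f g : Problem) : Prop := WRed f g ∧ WRed g f

/-- Continuous Weihrauch reducibility `f ≤*_W g`: as `WRed` but the functionals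
need only be partial continuous (continuous on their domains, Baire space carrying
the product topology). -/
def ContWRed (f g : Problem) : Prop :=
  ∃ h k : Baire → Baire,
    ContinuousOn k (Dom f) ∧
    ContinuousOn h {p | ∃ x ∈ Dom f, ∃ y ∈ g (k x), p = pair x y} ∧
    ∀ x ∈ Dom f, k x ∈ Dom g ∧ ∀ y ∈ g (k x), h (pair x y) ∈ f x

/-- Continuous Weihrauch equivalence. -/
def ContWEquiv (f g : Problem) : Prop := ContWRed f g ∧ ContWRed g f

/-- Composition of problems: `dom (f ∘ g) = {x ∈ dom g : g x ⊆ dom f}` and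
`(f ∘ g) x = {z : ∃ y ∈ g x, z ∈ f y}`. -/
def pcomp (f g : Problem) : Problem :=
  fun x => {z | g x ⊆ Dom f ∧ ∃ y ∈ g x, z ∈ f y}

/-- The identity problem. -/
def idp : Problem := fun x => {x}

/-- `p` is (a representative of) the compositional product `f * g`: the maximum,
with respect to `≤_W`, of `{f' ∘ g' : f' ≤_W f, g' ≤_W g}`. -/
def IsCompProd (f g p : Problem) : Prop :=
  (∃ f' g', WRed f' f ∧ WRed g' g ∧ WEquiv p (pcomp f' g')) ∧
  (∀ f' g', WRed f' f → WRed g' g → WRed (pcomp f' g') p)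

/-- `IsIter f n p` : `p` is (a representative of) `f^[n]`, the compositional product of
`n` copies of `f`, with `f^[0] := id`. -/
def IsIter (f : Problem) : ℕ → Problem → Prop
  | 0, p => p = idp
  | n + 1, p => ∃ q, IsIter f n q ∧ IsCompProd f q p

/-- The constant sequence with value `n`. -/
def cseq (n : ℕ) : Baire := fun _ => n

/-- The limited principle of omniscience. -/
def LPO : Problem := fun x =>
  {y | ((∃ n, x n = 0) ∧ y = cseq 0) ∨ ((∀ n, x n ≠ 0) ∧ y = cseq 1)}

/-- The lesser limited principle of omniscience. -/
def LLPO : Problem := fun x =>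
  {y | (∀ i j, x i ≠ 0 → x j ≠ 0 → i = j) ∧
       ((y = cseq 0 ∧ ∀ i, Even i → x i = 0) ∨
        (y = cseq 1 ∧ ∀ i, Odd i → x i = 0))}

/-- Turing reducibility between points of Baire space: `x` is computable from
oracle `y`. -/
def TuringLE (x y : Baire) : Prop :=
  ∃ φ : List ℕ → ℕ → Option ℕ, Computable₂ φ ∧
    ∀ n : ℕ, (∃ m, φ (initSeg y m) n = some (x n)) ∧
      (∀ m v, φ (initSeg y m) n = some v → v = x n)

/-- Mutual Turing reducibility: `x` and `y` have the same Turing degree. -/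
def TuringEquiv (x y : Baire) : Prop := TuringLE x y ∧ TuringLE y x

/-- Strict Turing reducibility. -/
def TuringLT (x y : Baire) : Prop := TuringLE x y ∧ ¬ TuringLE y x

/-- The problem `w_a`, for `a` a representative of a (non-zero) Turing degree. -/
def w (a : Baire) : Problem := fun x =>
  {y | (Computable x ∧ ¬ Computable y) ∨ (¬ Computable x ∧ TuringEquiv y a)}

/-- `k`-weak continuity of a problem. -/
def WeaklyContinuous (k : ℕ) (f : Problem) : Prop :=
  ∀ x ∈ Dom f, ∀ y : ℕ → Baire, (∀ n, y n ∈ Dom f) →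
    Filter.Tendsto y Filter.atTop (nhds x) →
    ∃ u ∈ f x, ∀ l < k, ∀ m : ℕ, ∃ n ≥ m,
      ∃ v ∈ f (y (n * k + l)), initSeg u m = initSeg v m

/-- Product of two problems. -/
def prodP (f g : Problem) : Problem := fun z =>
  {w | ∃ x y u v, z = pair x y ∧ w = pair u v ∧ u ∈ f x ∧ v ∈ g y}

/-- `powP f n` : the product of `n` copies of `f` (for `n ≥ 1`). -/
def powP (f : Problem) : ℕ → Problem
  | 0 => idp
  | 1 => f
  | n + 2 => prodP f (powP f (n + 1))

/-- A problem `f` is `k`-continuous: it has a realizer `r` (defined on a domain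
`D ⊇ Dom f`) together with a partition of `D` into at most `k` pieces (given by a
coloring `c`) such that `r` is continuous on each piece. -/
def kContinuous (k : ℕ) (f : Problem) : Prop :=
  ∃ (D : Set Baire) (r : Baire → Baire) (c : Baire → Fin k),
    Dom f ⊆ D ∧ (∀ x ∈ Dom f, r x ∈ f x) ∧
    ∀ i : Fin k, ContinuousOn r {x ∈ D | c x = i}

/-!
`LLPO × LLPO`, presented as "solve `LLPO` on the second coordinate" composed with "solve `LLPO`
on the first coordinate", lies below `LLPO * LLPO`, and it has no continuous reduction to `LLPO`.
The obstruction sits at the all-zero instance `x₀`: arbitrarily close to `x₀` there are instances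
whose only solution is any prescribed pair of constant sequences `(cseq a, cseq b)`, `a, b ≤ 1`.
Since `LLPO` has closed graph and only the two solutions `cseq 0`, `cseq 1`, a limit argument
forces the backward functional at `x₀` to produce all four pairs from just two `LLPO`-solutions.
-/

open Filter Topology Set

def unpairFst (p : Baire) : Baire := fun n => p (2 * n)

def unpairSnd (p : Baire) : Baire := fun n => p (2 * n + 1)

@[simp]
lemma unpairFst_pair (x y : Baire) : unpairFst (pair x y) = x := by
  funext n
  simp [unpairFst, pair]

@[simp]
lemma unpairSnd_pair (x y : Baire) : unpairSnd (pair x y) = y := by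
  funext n
  simp [unpairSnd, pair, Nat.add_mod, Nat.add_div]

lemma continuous_unpairFst : Continuous unpairFst := by
  unfold unpairFst; fun_prop

lemma continuous_unpairSnd : Continuous unpairSnd := by
  unfold unpairSnd; fun_prop

lemma continuous_pair : Continuous fun p : Baire × Baire => pair p.1 p.2 :=
  continuous_pi fun n => by unfold pair; split_ifs <;> fun_prop

lemma Filter.Tendsto.pair {ι : Type*} {l : Filter ι} {u w : ι → Baire} {a b : Baire}
    (hu : Tendsto u l (𝓝 a)) (hw : Tendsto w l (𝓝 b)) :
    Tendsto (fun t => pair (u t) (w t)) l (𝓝 (pair a b)) :=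
  (continuous_pair.tendsto (a, b)).comp (hu.prodMk_nhds hw)

lemma eventually_initSeg_eq (x : Baire) (m : ℕ) : ∀ᶠ y in 𝓝 x, initSeg y m = initSeg x m := by
  have h : ∀ᶠ y in 𝓝 x, ∀ i ∈ Finset.range m, y i = x i :=
    (Finset.range m).eventually_all.2 fun i _ =>
      (continuous_apply i).continuousAt.eventually_mem (isOpen_discrete {x i} |>.mem_nhds rfl)
  filter_upwards [h] with y hy
  exact List.map_congr_left fun i hi => hy i hi

lemma ComputableOn.continuousOn {F : Baire → Baire} {D : Set Baire} (h : ComputableOn F D) :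
    ContinuousOn F D := by
  obtain ⟨φ, -, hφ⟩ := h
  refine fun x hx => continuousWithinAt_pi.2 fun n => ?_
  obtain ⟨m, hm⟩ := (hφ x hx n).1
  rw [ContinuousWithinAt, nhds_discrete, tendsto_pure]
  filter_upwards [nhdsWithin_le_nhds (eventually_initSeg_eq x m), self_mem_nhdsWithin]
    with y hy hyD
  exact ((hφ y hyD n).2 m _ (hy ▸ hm)).symm

lemma computableOn_comp_right {G : ℕ → ℕ} (hG : Computable G) (D : Set Baire) :
    ComputableOn (fun x => x ∘ G) D := by
  refine ⟨fun σ n => σ[G n]?, Computable.list_getElem?.comp Computable.fst (hG.comp Computable.snd),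
    fun x _ n => ⟨⟨G n + 1, by simp [initSeg]⟩, fun m v hv => ?_⟩⟩
  simp only [initSeg, List.getElem?_map] at hv
  grind

lemma WRed.contWRed {f g : Problem} (h : WRed f g) : ContWRed f g :=
  let ⟨H, K, hK, hH, hR⟩ := h
  ⟨H, K, hK.continuousOn, hH.continuousOn, hR⟩

lemma ContWRed.trans {f g h : Problem} (hfg : ContWRed f g) (hgh : ContWRed g h) :
    ContWRed f h := by
  obtain ⟨H₁, K₁, cK₁, cH₁, R₁⟩ := hfg
  obtain ⟨H₂, K₂, cK₂, cH₂, R₂⟩ := hgh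
  set D := {p | ∃ x ∈ Dom f, ∃ y ∈ h (K₂ (K₁ x)), p = pair x y}
  have hfst : MapsTo unpairFst D (Dom f) := by
    rintro _ ⟨x, hx, y, -, rfl⟩
    simpa using hx
  have hinner : ContinuousOn (fun p => H₂ (pair (K₁ (unpairFst p)) (unpairSnd p))) D := by
    refine cH₂.comp (continuous_pair.comp_continuousOn
      ((cK₁.comp continuous_unpairFst.continuousOn hfst).prodMk
        continuous_unpairSnd.continuousOn)) ?_
    rintro _ ⟨x, hx, y, hy, rfl⟩
    exact ⟨K₁ x, (R₁ x hx).1, y, by simpa using hy, by simp⟩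
  refine ⟨fun p => H₁ (pair (unpairFst p) (H₂ (pair (K₁ (unpairFst p)) (unpairSnd p)))),
    fun x => K₂ (K₁ x), cK₂.comp cK₁ fun x hx => (R₁ x hx).1, ?_, fun x hx => ?_⟩
  · refine cH₁.comp (continuous_pair.comp_continuousOn
      (continuous_unpairFst.continuousOn.prodMk hinner)) ?_
    rintro _ ⟨x, hx, y, hy, rfl⟩
    exact ⟨x, hx, _, (R₂ _ (R₁ x hx).1).2 y hy, by simp⟩
  · refine ⟨(R₂ _ (R₁ x hx).1).1, fun z hz => ?_⟩
    simpa using (R₁ x hx).2 _ ((R₂ _ (R₁ x hx).1).2 z hz)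

lemma computable_ite_mod_two {G₀ G₁ : ℕ → ℕ} (h₀ : Primrec G₀) (h₁ : Primrec G₁) :
    Computable fun n => if n % 2 = 0 then G₀ n else G₁ n :=
  (Primrec.ite (Primrec.eq.comp (Primrec.nat_mod.comp .id (.const 2)) (.const 0)) h₀ h₁).to_comp

lemma primrec_two_mul : Primrec (2 * ·) := Primrec.nat_mul.comp (.const 2) .id

def onFst (g : Problem) : Problem := fun p => {q | ∃ y ∈ g (unpairFst p), q = pair y (unpairSnd p)}

def onSnd (g : Problem) : Problem := fun p => {q | ∃ y ∈ g (unpairSnd p), q = pair (unpairFst p) y}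

lemma wRed_onFst (g : Problem) : WRed (onFst g) g := by
  -- the backward map `⟨x, y⟩ ↦ ⟨y, unpairSnd x⟩` is a reindexing
  refine ⟨fun q => q ∘ fun n => if n % 2 = 0 then n + 1 else 2 * n, unpairFst,
    computableOn_comp_right primrec_two_mul.to_comp _,
    computableOn_comp_right (computable_ite_mod_two Primrec.succ primrec_two_mul) _,
    fun x ⟨_, y, hy, _⟩ => ⟨⟨y, hy⟩, fun y hy => ⟨y, hy, ?_⟩⟩⟩
  funext n
  simp only [Function.comp_apply, pair, unpairSnd]
  split_ifs <;> first | omega | (congr 1; omega)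

lemma wRed_onSnd (g : Problem) : WRed (onSnd g) g := by
  -- the backward map `⟨x, y⟩ ↦ ⟨unpairFst x, y⟩` is a reindexing
  refine ⟨fun q => q ∘ fun n => if n % 2 = 0 then 2 * n else n, unpairSnd,
    computableOn_comp_right (Primrec.succ.comp primrec_two_mul).to_comp _,
    computableOn_comp_right (computable_ite_mod_two primrec_two_mul .id) _,
    fun x ⟨_, y, hy, _⟩ => ⟨⟨y, hy⟩, fun y hy => ⟨y, hy, ?_⟩⟩⟩
  funext n
  simp only [Function.comp_apply, pair, unpairFst]
  split_ifs <;> first | omega | (congr 1; omega)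

lemma pcomp_onSnd_onFst_pair (f g : Problem) (u w : Baire) :
    pcomp (onSnd f) (onFst g) (pair u w) = image2 pair (g u) (f w) := by
  ext z
  constructor
  · rintro ⟨-, _, ⟨y, hy, rfl⟩, v, hv, rfl⟩
    simp only [unpairFst_pair, unpairSnd_pair] at hy hv ⊢
    exact ⟨y, hy, v, hv, rfl⟩
  · rintro ⟨y, hy, v, hv, rfl⟩
    refine ⟨?_, pair y w, ⟨y, by simpa using hy, by simp⟩, v, by simpa using hv, by simp⟩
    rintro _ ⟨y', -, rfl⟩
    exact ⟨_, v, by simpa using hv, rfl⟩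

lemma LLPO_subset (z : Baire) : LLPO z ⊆ {cseq 0, cseq 1} := fun y hy => by
  rcases hy.2 with ⟨rfl, -⟩ | ⟨rfl, -⟩ <;> simp

lemma isClosed_setOfPred_forall {X ι : Type*} [TopologicalSpace X] {p : ι → X → Prop}
    (h : ∀ i, IsClosed {z | p i z}) : IsClosed {z | ∀ i, p i z} := by
  rw [ofPred_forall]
  exact isClosed_iInter h

lemma isClosed_setOfPred_mem_LLPO (y : Baire) : IsClosed {z | y ∈ LLPO z} := by
  have hdom : IsClosed {z : Baire | ∀ i j, z i ≠ 0 → z j ≠ 0 → i = j} :=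
    isClosed_setOfPred_forall fun i => isClosed_setOfPred_forall fun j =>
      (isClosed_discrete {p : ℕ × ℕ | p.1 ≠ 0 → p.2 ≠ 0 → i = j}).preimage
        (by fun_prop : Continuous fun z : Baire => (z i, z j))
  have hparity (P : ℕ → Prop) : IsClosed {z : Baire | ∀ i, P i → z i = 0} :=
    isClosed_setOfPred_forall fun i =>
      (isClosed_discrete {n | P i → n = 0}).preimage (continuous_apply i)
  exact hdom.inter ((isClosed_const.inter (hparity _)).union (isClosed_const.inter (hparity _)))

lemma cseq_zero_mem_LLPO : cseq 0 ∈ LLPO (cseq 0) :=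
  ⟨fun _ _ h => absurd rfl h, .inl ⟨rfl, fun _ _ => rfl⟩⟩

lemma LLPO_single_odd (t : ℕ) : LLPO (Pi.single (2 * t + 1) 1) = {cseq 0} := by
  ext y
  simp only [LLPO, mem_ofPred_eq, mem_singleton_iff, Pi.single_apply, ne_eq, ite_eq_right_iff,
    one_ne_zero, imp_false, not_not]
  grind

lemma LLPO_single_even (t : ℕ) : LLPO (Pi.single (2 * t) 1) = {cseq 1} := by
  ext y
  simp only [LLPO, mem_ofPred_eq, mem_singleton_iff, Pi.single_apply, ne_eq, ite_eq_right_iff,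
    one_ne_zero, imp_false, not_not]
  grind

lemma tendsto_single_cseq_zero {f : ℕ → ℕ} (hf : Tendsto f atTop atTop) :
    Tendsto (fun t => (Pi.single (f t) 1 : Baire)) atTop (𝓝 (cseq 0)) :=
  tendsto_pi_nhds.2 fun i => tendsto_const_nhds.congr'
    ((hf.eventually_gt_atTop i).mono fun t ht => by simp [ht.ne', cseq])

lemma exists_tendsto_LLPO_eq_singleton {a : ℕ} (ha : a ≤ 1) :
    ∃ z : ℕ → Baire, Tendsto z atTop (𝓝 (cseq 0)) ∧ ∀ t, LLPO (z t) = {cseq a} := by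
  interval_cases a
  · refine ⟨fun t => Pi.single (2 * t + 1) 1, tendsto_single_cseq_zero ?_, LLPO_single_odd⟩
    exact tendsto_atTop_mono (fun t => show t ≤ 2 * t + 1 by omega) tendsto_id
  · refine ⟨fun t => Pi.single (2 * t) 1, tendsto_single_cseq_zero ?_, LLPO_single_even⟩
    exact tendsto_atTop_mono (fun t => show t ≤ 2 * t by omega) tendsto_id

lemma exists_backward_mem_of_tendsto {f g : Problem} {H K : Baire → Baire}
    (cK : ContinuousOn K (Dom f))
    (cH : ContinuousOn H {p | ∃ x ∈ Dom f, ∃ y ∈ g (K x), p = pair x y})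
    (R : ∀ x ∈ Dom f, K x ∈ Dom g ∧ ∀ y ∈ g (K x), H (pair x y) ∈ f x)
    {S : Set Baire} (hS : S.Finite) (hgS : ∀ z, g z ⊆ S) (hg : ∀ y, IsClosed {z | y ∈ g z})
    {ι : Type*} {l : Filter ι} [l.NeBot] {x : ι → Baire} {x₀ : Baire}
    (hx : Tendsto x l (𝓝 x₀)) (hxf : ∀ t, x t ∈ Dom f) (hx₀ : x₀ ∈ Dom f)
    {C : Set Baire} (hC : IsClosed C) (hfC : ∀ t, f (x t) ⊆ C) :
    ∃ y ∈ g (K x₀), H (pair x₀ y) ∈ C := by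
  choose y hy using fun t => (R _ (hxf t)).1
  -- pigeonhole: some `c ∈ S` is the chosen solution frequently; pass to the limit along those `t`
  obtain ⟨c, -, hc⟩ :=
    hS.frequently_exists (l := l) (p := fun c t => c = y t) |>.1
      (.of_forall fun t => ⟨y t, hgS _ (hy t), rfl⟩)
  have : (l ⊓ 𝓟 {t | c = y t}).NeBot := frequently_iff_neBot.1 hc
  set l' := l ⊓ 𝓟 {t | c = y t}
  have hcx : ∀ᶠ t in l', c ∈ g (K (x t)) :=
    eventually_inf_principal.2 (.of_forall fun t ht => ht ▸ hy t)
  have hx' : Tendsto x l' (𝓝 x₀) := hx.mono_left inf_le_left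
  have hc₀ : c ∈ g (K x₀) := (hg c).mem_of_tendsto
    ((cK x₀ hx₀).tendsto.comp (tendsto_nhdsWithin_iff.2 ⟨hx', .of_forall hxf⟩)) hcx
  refine ⟨c, hc₀, hC.mem_of_tendsto ((cH _ ⟨x₀, hx₀, c, hc₀, rfl⟩).tendsto.comp
    (tendsto_nhdsWithin_iff.2 ⟨?_, hcx.mono fun t ht => ⟨x t, hxf t, c, ht, rfl⟩⟩))
    (hcx.mono fun t ht => hfC t ((R _ (hxf t)).2 c ht))⟩
  exact hx'.pair tendsto_const_nhds

lemma not_contWRed_pcomp_onSnd_onFst_LLPO :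
    ¬ ContWRed (pcomp (onSnd LLPO) (onFst LLPO)) LLPO := by
  rintro ⟨H, K, cK, cH, R⟩
  set P := pcomp (onSnd LLPO) (onFst LLPO)
  have hP : ∀ u w, P (pair u w) = image2 pair (LLPO u) (LLPO w) := pcomp_onSnd_onFst_pair _ _
  set x₀ := pair (cseq 0) (cseq 0)
  have hx₀ : x₀ ∈ Dom P := by
    show (P x₀).Nonempty
    rw [hP, image2_nonempty_iff]
    exact ⟨⟨_, cseq_zero_mem_LLPO⟩, ⟨_, cseq_zero_mem_LLPO⟩⟩
  have key : ∀ a b, a ≤ 1 → b ≤ 1 →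
      ∃ y ∈ ({cseq 0, cseq 1} : Set Baire), H (pair x₀ y) 0 = a ∧ H (pair x₀ y) 1 = b := by
    intro a b ha hb
    obtain ⟨u, hu, hLu⟩ := exists_tendsto_LLPO_eq_singleton ha
    obtain ⟨w, hw, hLw⟩ := exists_tendsto_LLPO_eq_singleton hb
    have hPt (t : ℕ) : P (pair (u t) (w t)) = {pair (cseq a) (cseq b)} := by
      rw [hP, hLu, hLw, image2_singleton]
    obtain ⟨y, hy, hHy⟩ := exists_backward_mem_of_tendsto cK cH R (toFinite _) LLPO_subset
      isClosed_setOfPred_mem_LLPO (hu.pair hw)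
      (fun t => show (P _).Nonempty by rw [hPt]; exact singleton_nonempty _) hx₀
      isClosed_singleton (fun t => (hPt t).subset)
    rw [mem_singleton_iff] at hHy
    exact ⟨y, LLPO_subset _ hy, by rw [hHy]; exact ⟨rfl, rfl⟩⟩
  -- three answer patterns, but only two candidate solutions at `x₀`
  obtain ⟨y₁, hy₁, h₁⟩ := key 0 0 zero_le_one zero_le_one
  obtain ⟨y₂, hy₂, h₂⟩ := key 0 1 zero_le_one le_rfl
  obtain ⟨y₃, hy₃, h₃⟩ := key 1 0 le_rfl zero_le_one
  rcases hy₁ with rfl | rfl <;> rcases hy₂ with rfl | rfl <;> rcases hy₃ with rfl | rfl <;> omega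

/-- `LLPO * LLPO` is not continuously Weihrauch reducible to `LLPO`. -/
theorem llpo_star_llpo_not_red_llpo (p : Problem) (hp : IsCompProd LLPO LLPO p) :
    ¬ ContWRed p LLPO := fun hred =>
  not_contWRed_pcomp_onSnd_onFst_LLPO
    ((hp.2 _ _ (wRed_onSnd LLPO) (wRed_onFst LLPO)).contWRed.trans hred)
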